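/- arXiv:2409.09703 — 2 statements merged into one kernel-verified Lean document; each statement's English description precedes it below -/
import Mathlib

section
/- Fix a prime p and a group G. Assume G has a Sylow p-subgroup S that is a discrete p-toral group. Then any p-subgroup P ≤ G with the property that every finite p-subgroup of G is conjugate in G to a subgroup of P is itself a Sylow p-subgroup of G, i.e., every p-subgroup of G is conjugate in G to a subgroup of P. -/
/-- The image of the `p`-adic integers in `ℚ_[p]`, as an additive subgroup. -/
noncomputable def padicIntAddSubgroup (p : ℕ) [Fact p.Prime] : AddSubgroup ℚ_[p] :=
  (PadicInt.Coe.ringHom (p := p)).toAddMonoidHom.range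

/-- The Prüfer `p`-group `ℤ(p^∞)`, realized as `ℚ_[p] ⧸ ℤ_[p]`. -/
abbrev ZpInfty (p : ℕ) [Fact p.Prime] : Type :=
  ℚ_[p] ⧸ padicIntAddSubgroup p

/-- The discrete `p`-torus of rank `r`. -/
abbrev DiscretePTorus (p : ℕ) [Fact p.Prime] (r : ℕ) : Type :=
  Fin r → ZpInfty p

/-- A group `S` is discrete `p`-toral if it has a normal subgroup of finite `p`-power
index that is isomorphic to a discrete `p`-torus. -/
def IsDiscretePToral (p : ℕ) [Fact p.Prime] (S : Type*) [Group S] : Prop :=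
  ∃ T : Subgroup S, T.Normal ∧ (∃ n : ℕ, T.index = p ^ n) ∧
    ∃ r : ℕ, Nonempty (T ≃* Multiplicative (DiscretePTorus p r))

/-!
Conjugating `P` into `S`, it suffices to show that a subgroup `P ≤ S` receiving an injective
homomorphism `φ` from every finite subgroup of `S` is all of `S`. Let `T ⊴ S` be the torus, `T[n]`
its (finite) `n`-torsion and `N = [S : T]`. As `T` is divisible, each element of `T[n]` is the
`N`-th power of an element of `T[Nn]`, and `N`-th powers of elements of `S` lie in `T`; so `φ`
maps `T[n]` into itself, hence onto itself by finiteness, whenever it is defined on `T[Nn]`.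
This gives `T ≤ P`. Next, `S` is locally finite (a finitely generated subgroup is virtually
abelian and torsion), so some finite `H ≤ S` maps onto `S/T`. Applying the above to `φ` defined on
`H ⊔ T[N |H|]` shows that `φ(h) ∈ T` forces `h ∈ T`, so `h ↦ φ(h) T` has the same kernel as
`H → S/T` and is onto `S/T` as well. Hence `S = φ(H) T ≤ P`.
-/

namespace ZpInfty

variable {p : ℕ} [Fact p.Prime]

theorem mem_padicIntAddSubgroup {q : ℚ_[p]} :
    q ∈ padicIntAddSubgroup p ↔ ∃ w : ℤ_[p], (w : ℚ_[p]) = q :=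
  Iff.rfl

theorem nsmul_surjective {n : ℕ} (hn : n ≠ 0) :
    Function.Surjective fun z : ZpInfty p => n • z := by
  intro z
  induction z using QuotientAddGroup.induction_on with | H q => ?_
  refine ⟨((q / n : ℚ_[p]) : ZpInfty p), ?_⟩
  simp only [← QuotientAddGroup.mk_nsmul, nsmul_eq_mul,
    mul_div_cancel₀ _ ((Nat.cast_ne_zero (R := ℚ_[p])).2 hn)]

theorem finite_setOf_pow_nsmul_eq_zero (k : ℕ) : {z : ZpInfty p | p ^ k • z = 0}.Finite := by
  have hpk : (p : ℚ_[p]) ^ k ≠ 0 := pow_ne_zero _ (Nat.cast_ne_zero.2 (Fact.out : p.Prime).ne_zero)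
  refine ((Set.finite_Iio (p ^ k)).image
    fun n : ℕ => ((n / (p : ℚ_[p]) ^ k : ℚ_[p]) : ZpInfty p)).subset ?_
  intro z hz
  induction z using QuotientAddGroup.induction_on with | H q => ?_
  obtain ⟨w, hw⟩ : ∃ w : ℤ_[p], (w : ℚ_[p]) = p ^ k * q := by
    refine mem_padicIntAddSubgroup.1 ?_
    simpa [← QuotientAddGroup.mk_nsmul, nsmul_eq_mul] using hz
  -- `q = w / p ^ k` differs from `appr w k / p ^ k` by an element of `ℤ_[p]`
  obtain ⟨c, hc⟩ := Ideal.mem_span_singleton'.1 (w.appr_spec k)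
  have hcq : ((-c : ℤ_[p]) : ℚ_[p]) = (w.appr k : ℚ_[p]) / p ^ k - q := by
    have := congrArg ((↑) : ℤ_[p] → ℚ_[p]) hc
    push_cast at this ⊢
    field_simp
    linear_combination -hw - this
  exact ⟨w.appr k, w.appr_lt k, (QuotientAddGroup.eq_iff_sub_mem).2 ⟨-c, hcq⟩⟩

end ZpInfty

namespace DiscretePTorus

variable {p : ℕ} [Fact p.Prime] {r : ℕ}

theorem pow_surjective {n : ℕ} (hn : n ≠ 0) :
    Function.Surjective fun x : Multiplicative (DiscretePTorus p r) => x ^ n := fun x =>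
  ⟨.ofAdd fun i => (ZpInfty.nsmul_surjective hn (x.toAdd i)).choose,
    funext fun i => (ZpInfty.nsmul_surjective hn (x.toAdd i)).choose_spec⟩

theorem finite_setOf_pow_eq_one (k : ℕ) :
    {x : Multiplicative (DiscretePTorus p r) | x ^ p ^ k = 1}.Finite :=
  (Set.Finite.pi fun _ => ZpInfty.finite_setOf_pow_nsmul_eq_zero k).subset
    fun _ hx i _ => congrFun hx i

end DiscretePTorus

theorem MonoidHom.surjective_of_ker_le_ker {H Q : Type*} [Group H] [Group Q] [Finite Q]
    {ψ ψ₀ : H →* Q} (h₀ : Function.Surjective ψ₀) (hker : ψ.ker ≤ ψ₀.ker) :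
    Function.Surjective ψ := by
  rw [← range_eq_top]
  refine Subgroup.eq_top_of_le_card _ ?_
  calc Nat.card Q = ψ₀.ker.index := by rw [Subgroup.index_ker, range_eq_top.2 h₀, Subgroup.card_top]
    _ ≤ ψ.ker.index := Subgroup.index_antitone hker
    _ = Nat.card ψ.range := Subgroup.index_ker ψ

namespace Subgroup

variable {S : Type*} [Group S]

theorem finite_of_fg_of_isMulTorsion (hS : IsMulTorsion S) (T : Subgroup S) [T.FiniteIndex]
    [IsMulCommutative T] (H : Subgroup S) [Group.FG H] : Finite H := by
  open scoped IsMulCommutative in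
  have : Finite (T.subgroupOf H) :=
    CommGroup.finite_of_fg_isMulTorsion _ ((hS.subgroup H).subgroup _)
  exact (finite_iff_finite_and_finiteIndex (T.subgroupOf H)).2 ⟨this, inferInstance⟩

theorem exists_finite_surjective_mk (hS : IsMulTorsion S) (T : Subgroup S) [T.Normal]
    [T.FiniteIndex] [IsMulCommutative T] :
    ∃ H : Subgroup S, Finite H ∧ Function.Surjective ((QuotientGroup.mk' T).comp H.subtype) := by
  have : Finite (S ⧸ T) := T.finite_quotient_of_finiteIndex
  let H := closure (Set.range (Quotient.out : S ⧸ T → S))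
  have : Group.FG H := Group.closure_finite_fg _
  exact ⟨H, finite_of_fg_of_isMulTorsion hS T H,
    fun q => ⟨⟨q.out, subset_closure ⟨q, rfl⟩⟩, QuotientGroup.out_eq' q⟩⟩

def torsionBy (T : Subgroup S) [IsMulCommutative T] (n : ℕ) : Subgroup S where
  carrier := {x | x ∈ T ∧ x ^ n = 1}
  one_mem' := ⟨T.one_mem, one_pow n⟩
  mul_mem' := fun ⟨hx, hxn⟩ ⟨hy, hyn⟩ =>
    ⟨T.mul_mem hx hy, by rw [Commute.mul_pow (setLike_mul_comm hx hy), hxn, hyn, one_mul]⟩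
  inv_mem' := fun ⟨hx, hxn⟩ => ⟨T.inv_mem hx, by rw [inv_pow, hxn, inv_one]⟩

section torsionBy

variable (T : Subgroup S) [IsMulCommutative T]

theorem torsionBy_le_of_dvd {m n : ℕ} (h : m ∣ n) : T.torsionBy m ≤ T.torsionBy n := by
  rintro x ⟨hx, hxm⟩
  obtain ⟨c, rfl⟩ := h
  exact ⟨hx, by rw [pow_mul, hxm, one_pow]⟩

instance normal_torsionBy [T.Normal] (n : ℕ) : (T.torsionBy n).Normal :=
  ⟨fun x ⟨hx, hxn⟩ g =>
    ⟨Normal.conj_mem ‹_› x hx g, by rw [conj_pow, hxn, mul_one, mul_inv_cancel]⟩⟩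

theorem finite_torsionBy {n : ℕ} (h : {t : T | t ^ n = 1}.Finite) : Finite (T.torsionBy n) := by
  refine ((h.image Subtype.val).subset ?_).to_subtype
  rintro x ⟨hx, hxn⟩
  exact ⟨⟨x, hx⟩, Subtype.ext hxn, rfl⟩

theorem finite_torsionBy_index_mul_pow {p : ℕ} [Fact p.Prime] [T.FiniteIndex] (hS : IsPGroup p S)
    (hfin : ∀ k, {t : T | t ^ p ^ k = 1}.Finite) (k : ℕ) :
    Finite (T.torsionBy (T.index * p ^ k)) := by
  obtain ⟨a, ha⟩ := hS.index T
  rw [ha, ← pow_add]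
  exact T.finite_torsionBy (hfin _)

variable {T} [T.Normal] [T.FiniteIndex]

theorem map_torsionBy_subgroupOf_eq (hroot : ∀ n ≠ 0, Function.Surjective fun t : T => t ^ n)
    {F : Subgroup S} {φ : F →* S} (hφ : Function.Injective φ)
    {n : ℕ} [Finite (T.torsionBy n)] (hF : T.torsionBy (T.index * n) ≤ F) :
    ((T.torsionBy n).subgroupOf F).map φ = T.torsionBy n := by
  have hle : T.torsionBy n ≤ F := (T.torsionBy_le_of_dvd (dvd_mul_left n T.index)).trans hF
  have hmaps : ((T.torsionBy n).subgroupOf F).map φ ≤ T.torsionBy n := by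
    rintro _ ⟨y, ⟨hyT, hyn⟩, rfl⟩
    obtain ⟨u, hu⟩ : ∃ u : T, u ^ T.index = ⟨y, hyT⟩ :=
      hroot T.index FiniteIndex.index_ne_zero ⟨y, hyT⟩
    have huF : (u : S) ∈ F := hF ⟨u.2, by
      rw [pow_mul, ← SubmonoidClass.coe_pow, hu]; exact hyn⟩
    have hy : y = ⟨u, huF⟩ ^ T.index := Subtype.ext (congrArg Subtype.val hu).symm
    refine ⟨?_, by rw [← map_pow, show y ^ n = 1 from Subtype.ext hyn, map_one]⟩
    rw [hy, map_pow]
    exact T.pow_index_mem _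
  refine eq_of_le_of_card_ge hmaps ?_
  rw [card_map_of_injective hφ, Nat.card_congr (subgroupOfEquivOfLe hle).toEquiv]

theorem mem_of_map_mem (hroot : ∀ n ≠ 0, Function.Surjective fun t : T => t ^ n)
    {F : Subgroup S} {φ : F →* S} (hφ : Function.Injective φ) {n : ℕ}
    [Finite (T.torsionBy n)] (hF : T.torsionBy (T.index * n) ≤ F) {x : F}
    (hxn : x ^ n = 1) (hφx : φ x ∈ T) : (x : S) ∈ T := by
  have hφxn : φ x ∈ T.torsionBy n := ⟨hφx, by rw [← map_pow, hxn, map_one]⟩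
  rw [← map_torsionBy_subgroupOf_eq hroot hφ hF] at hφxn
  obtain ⟨y, ⟨hyT, -⟩, hy⟩ := hφxn
  rwa [← hφ hy]

variable {p : ℕ} [Fact p.Prime]

theorem le_of_forall_finite_exists_injective (hS : IsPGroup p S)
    (hroot : ∀ n ≠ 0, Function.Surjective fun t : T => t ^ n)
    (hfin : ∀ k, {t : T | t ^ p ^ k = 1}.Finite) {P : Subgroup S}
    (hP : ∀ F : Subgroup S, Finite F → ∃ φ : F →* S, Function.Injective φ ∧ φ.range ≤ P) :
    T ≤ P := by
  intro t ht
  obtain ⟨k, hk⟩ := hS t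
  have := T.finite_torsionBy (hfin k)
  obtain ⟨φ, hφ, hφP⟩ := hP _ (T.finite_torsionBy_index_mul_pow hS hfin k)
  have htk : t ∈ T.torsionBy (p ^ k) := ⟨ht, hk⟩
  rw [← map_torsionBy_subgroupOf_eq hroot hφ le_rfl] at htk
  obtain ⟨y, -, rfl⟩ := htk
  exact hφP ⟨y, rfl⟩

theorem eq_top_of_forall_finite_exists_injective (hS : IsPGroup p S)
    (hroot : ∀ n ≠ 0, Function.Surjective fun t : T => t ^ n)
    (hfin : ∀ k, {t : T | t ^ p ^ k = 1}.Finite) {P : Subgroup S}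
    (hP : ∀ F : Subgroup S, Finite F → ∃ φ : F →* S, Function.Injective φ ∧ φ.range ≤ P) :
    P = ⊤ := by
  have hTP := le_of_forall_finite_exists_injective hS hroot hfin hP
  obtain ⟨H, _, hH⟩ := exists_finite_surjective_mk (hS.isOfFinOrder (Fact.out : p.Prime).ne_zero) T
  obtain ⟨e, he⟩ := (hS.to_subgroup H).exists_card_eq
  have := T.finite_torsionBy (hfin e)
  have := T.finite_torsionBy_index_mul_pow hS hfin e
  let F := H ⊔ T.torsionBy (T.index * p ^ e)
  have hFfin : Finite F := by
    refine Set.Finite.to_subtype ?_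
    rw [mul_normal]
    exact (Set.toFinite _).mul (Set.toFinite _)
  obtain ⟨φ, hφ, hφP⟩ := hP F hFfin
  let ψ : H →* S ⧸ T := (QuotientGroup.mk' T).comp (φ.comp (inclusion le_sup_left))
  have hψ : Function.Surjective ψ := by
    refine MonoidHom.surjective_of_ker_le_ker hH fun h hh => ?_
    refine (QuotientGroup.eq_one_iff _).2 (mem_of_map_mem hroot hφ le_sup_right
      (x := inclusion le_sup_left h) ?_ ((QuotientGroup.eq_one_iff _).1 hh))
    rw [← map_pow, show h ^ p ^ e = 1 from he ▸ pow_card_eq_one', map_one]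
  refine eq_top_iff.2 fun s _ => ?_
  obtain ⟨h, hh⟩ := hψ s
  have hs : (φ (inclusion le_sup_left h))⁻¹ * s ∈ T := QuotientGroup.eq.1 hh
  simpa using P.mul_mem (hφP ⟨inclusion le_sup_left h, rfl⟩) (hTP hs)

end torsionBy

end Subgroup

theorem IsDiscretePToral.eq_top_of_forall_finite_exists_injective {p : ℕ} [Fact p.Prime]
    {S : Type*} [Group S] (hS : IsPGroup p S) (hST : IsDiscretePToral p S) {P : Subgroup S}
    (hP : ∀ F : Subgroup S, Finite F → ∃ φ : F →* S, Function.Injective φ ∧ φ.range ≤ P) :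
    P = ⊤ := by
  obtain ⟨T, _, ⟨n, hn⟩, r, ⟨e⟩⟩ := hST
  have : T.FiniteIndex := ⟨by rw [hn]; exact pow_ne_zero n (Fact.out : p.Prime).ne_zero⟩
  have : IsMulCommutative T := ⟨⟨fun a b => e.injective (by rw [map_mul, map_mul, mul_comm])⟩⟩
  refine T.eq_top_of_forall_finite_exists_injective hS (fun m hm t => ?_) (fun k => ?_) hP
  · obtain ⟨u, hu⟩ := DiscretePTorus.pow_surjective hm (e t)
    exact ⟨e.symm u, e.injective (by simp [hu])⟩
  · refine ((DiscretePTorus.finite_setOf_pow_eq_one k).preimage e.injective.injOn).subset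
      fun t ht => ?_
    simp [← map_pow, ht.out]

theorem Subgroup.map_conj_mul {G : Type*} [Group G] (a b : G) (Q : Subgroup G) :
    Q.map (MulAut.conj (a * b)).toMonoidHom =
      (Q.map (MulAut.conj b).toMonoidHom).map (MulAut.conj a).toMonoidHom := by
  rw [map_map, map_mul]
  rfl

theorem Subgroup.map_conj_inv_map_conj {G : Type*} [Group G] (a : G) (Q : Subgroup G) :
    (Q.map (MulAut.conj a).toMonoidHom).map (MulAut.conj a⁻¹).toMonoidHom = Q := by
  rw [← map_conj_mul, inv_mul_cancel]
  ext
  simp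

theorem Subgroup.exists_injective_range_le_subgroupOf {G : Type*} [Group G] {S X : Subgroup G}
    (hXS : X ≤ S) (F : Subgroup S) (g : G)
    (hg : (F.map S.subtype).map (MulAut.conj g).toMonoidHom ≤ X) :
    ∃ φ : F →* S, Function.Injective φ ∧ φ.range ≤ X.subgroupOf S := by
  have hmem (x : F) : MulAut.conj g (x : S) ∈ X := hg ⟨x, ⟨x, x.2, rfl⟩, rfl⟩
  refine ⟨((MulAut.conj g).toMonoidHom.comp (S.subtype.comp F.subtype)).codRestrict S
    fun x => hXS (hmem x), fun x y hxy => ?_, ?_⟩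
  · exact Subtype.ext (Subtype.ext ((MulAut.conj g).injective (congrArg Subtype.val hxy)))
  · rintro _ ⟨x, rfl⟩
    exact hmem x

/-- Suppose `G` has a Sylow `p`-subgroup `S` (a `p`-subgroup into
which every `p`-subgroup of `G` can be conjugated) that is discrete `p`-toral. Then
every `p`-subgroup `P ≤ G` containing every finite `p`-subgroup of `G` up to
conjugacy is itself a Sylow `p`-subgroup of `G`. -/
theorem sylow_of_contains_finite_pSubgroups
    (p : ℕ) [Fact p.Prime] {G : Type*} [Group G]
    (S : Subgroup G) (hSp : IsPGroup p S) (hStoral : IsDiscretePToral p S)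
    (hSsyl : ∀ Q : Subgroup G, IsPGroup p Q →
      ∃ g : G, Subgroup.map (MulAut.conj g).toMonoidHom Q ≤ S)
    (P : Subgroup G) (hPp : IsPGroup p P)
    (hPfin : ∀ Q : Subgroup G, IsPGroup p Q → Finite Q →
      ∃ g : G, Subgroup.map (MulAut.conj g).toMonoidHom Q ≤ P) :
    ∀ Q : Subgroup G, IsPGroup p Q →
      ∃ g : G, Subgroup.map (MulAut.conj g).toMonoidHom Q ≤ P := by
  obtain ⟨k, hk⟩ := hSsyl P hPp
  have hSP : S ≤ P.map (MulAut.conj k).toMonoidHom := by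
    rw [← Subgroup.subgroupOf_eq_top]
    refine hStoral.eq_top_of_forall_finite_exists_injective hSp fun F _ => ?_
    have : Finite (F.map S.subtype) :=
      Finite.of_surjective _ (F.equivMapOfInjective _ S.subtype_injective).surjective
    obtain ⟨g, hg⟩ := hPfin (F.map S.subtype) (hSp.to_le (Subgroup.map_subtype_le F)) this
    refine Subgroup.exists_injective_range_le_subgroupOf hk F (k * g) ?_
    rw [Subgroup.map_conj_mul]
    exact Subgroup.map_mono hg
  intro Q hQ
  obtain ⟨h, hh⟩ := hSsyl Q hQ
  refine ⟨k⁻¹ * h, ?_⟩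
  calc Q.map (MulAut.conj (k⁻¹ * h)).toMonoidHom
      = (Q.map (MulAut.conj h).toMonoidHom).map (MulAut.conj k⁻¹).toMonoidHom :=
        Subgroup.map_conj_mul _ _ _
    _ ≤ (P.map (MulAut.conj k).toMonoidHom).map (MulAut.conj k⁻¹).toMonoidHom :=
        Subgroup.map_mono (hh.trans hSP)
    _ = P := Subgroup.map_conj_inv_map_conj k P
end

section
/- Let p be a prime and r ≥ 0, and let T be the discrete p-torus of rank r. Set k = 1 if p is odd and k = 2 if p = 2. If α is an automorphism of T of finite order such that α(x) = x for every x ∈ T with p^k · x = 0, then α is the identity. Equivalently, any finite group of automorphisms of T acts faithfully on Ω₁(T) when p is odd, and on Ω₂(T) when p = 2. -/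
/-! It suffices to treat an automorphism `α` of prime order `q`. Put `b = α - 1`, so that
`(1 + b) ^ q = 1`, and suppose `b` kills `Ω_t` for some `t ≥ k`. Then `b ^ j` kills `Ω_{jt}`, and the
binomial expansion gives `q • b = -∑_{2 ≤ j ≤ q} (q choose j) • b ^ j`.
* If `q ≠ p`, the right side kills `Ω_{t+1}`; as `b` maps `Ω_{t+1}` into `Ω_1`, on which `q` is
  injective, `b` kills `Ω_{t+1}`.
* If `q = p`, the right side kills `Ω_{t+2}`: for `j < p` because `p ∣ (p choose j)`, and for `j = p`
  because `pt ≥ t + 2`, which is where `(p - 1) k ≥ 2` enters. Since `T` is `p`-divisible, `b`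
  kills `Ω_{t+1}`.
By induction `b` kills every `Ω_n`, so `b = 0` because `T` is a `p`-group. -/

open Finset

theorem add_one_pow_eq_one_add_nsmul_add_sum_Ico {R : Type*} [Semiring R] (b : R) (q : ℕ) :
    (b + 1) ^ q = 1 + q • b + ∑ j ∈ Ico 2 (q + 1), q.choose j • b ^ j := by
  rcases q with _ | q
  · simp
  rw [(Commute.one_right b).add_pow, range_eq_Ico, sum_eq_sum_Ico_succ_bot (by omega),
    sum_eq_sum_Ico_succ_bot (by omega), ← add_assoc]
  simp only [zero_add, Nat.reduceAdd, one_pow, mul_one, pow_zero, pow_one, Nat.choose_zero_right,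
    Nat.choose_one_right, Nat.cast_one, nsmul_eq_mul']

theorem eq_zero_of_nsmul_eq_zero_of_coprime {G : Type*} [AddGroup G] {x : G} {m n : ℕ}
    (hmn : m.Coprime n) (hm : m • x = 0) (hn : n • x = 0) : x = 0 := by
  have h : addOrderOf x ∣ 1 :=
    hmn ▸ Nat.dvd_gcd (addOrderOf_dvd_of_nsmul_eq_zero hm) (addOrderOf_dvd_of_nsmul_eq_zero hn)
  exact AddMonoid.addOrderOf_eq_one_iff.mp (Nat.eq_one_of_dvd_one h)

theorem Pi.exists_pow_nsmul_eq_zero {ι : Type*} [Fintype ι] {B : ι → Type*}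
    [∀ i, AddMonoid (B i)] {p : ℕ} (h : ∀ i (x : B i), ∃ n, p ^ n • x = 0) (x : ∀ i, B i) :
    ∃ n, p ^ n • x = 0 := by
  choose n hn using fun i => h i (x i)
  refine ⟨univ.sup n, funext fun i => ?_⟩
  rw [Pi.smul_apply, ← Nat.sub_add_cancel (le_sup (mem_univ i)), pow_add, mul_smul, hn i,
    smul_zero, Pi.zero_apply]

namespace AddMonoid.End

variable {A : Type*} [AddCommGroup A] {p : ℕ}

def omegaAnnihilator (p n : ℕ) : Ideal (AddMonoid.End A) where
  carrier := {f | ∀ x : A, p ^ n • x = 0 → f x = 0}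
  zero_mem' _ _ := rfl
  add_mem' {f g} hf hg x hx := show f x + g x = 0 by rw [hf x hx, hg x hx, add_zero]
  smul_mem' c f hf x hx := show c (f x) = 0 by rw [hf x hx, map_zero]

variable {f g : AddMonoid.End A} {m n : ℕ}

theorem omegaAnnihilator_antitone : Antitone (omegaAnnihilator (A := A) p) :=
  fun m n hmn _ hf x hx => hf x (by rw [← Nat.sub_add_cancel hmn, pow_add, mul_smul, hx, smul_zero])

theorem mul_mem_omegaAnnihilator_add (hf : f ∈ omegaAnnihilator p m)
    (hg : g ∈ omegaAnnihilator p n) : f * g ∈ omegaAnnihilator p (m + n) := fun x hx =>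
  hf (g x) (by rw [← map_nsmul]; exact hg _ (by rwa [← mul_smul, ← pow_add, add_comm]))

theorem pow_mem_omegaAnnihilator_mul (hf : f ∈ omegaAnnihilator p n) :
    ∀ j : ℕ, f ^ j ∈ omegaAnnihilator p (j * n)
  | 0 => fun x hx => by simpa using hx
  | j + 1 => by
    rw [pow_succ, Nat.succ_mul]
    exact mul_mem_omegaAnnihilator_add (pow_mem_omegaAnnihilator_mul hf j) hf

theorem nsmul_mem_omegaAnnihilator_succ (hf : f ∈ omegaAnnihilator p n) :
    p • f ∈ omegaAnnihilator p (n + 1) := fun x hx => by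
  show p • f x = 0
  rw [← map_nsmul]
  exact hf _ (by rwa [← mul_smul, ← pow_succ])

theorem mem_omegaAnnihilator_of_nsmul_mem_succ (hdiv : ∀ x : A, ∃ y, p • y = x)
    (hf : p • f ∈ omegaAnnihilator p (n + 1)) : f ∈ omegaAnnihilator p n := fun x hx => by
  obtain ⟨y, rfl⟩ := hdiv x
  rw [map_nsmul]
  exact hf y (by rwa [pow_succ, mul_smul])

variable {a : AddMonoid.End A} {q t : ℕ}

theorem nsmul_sub_one_eq_neg_sum (ha : a ^ q = 1) :
    q • (a - 1) = -∑ j ∈ Ico 2 (q + 1), q.choose j • (a - 1) ^ j := by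
  have h := add_one_pow_eq_one_add_nsmul_add_sum_Ico (a - 1) q
  rw [sub_add_cancel, ha, add_assoc, left_eq_add] at h
  exact eq_neg_of_add_eq_zero_left h

theorem sub_one_mem_omegaAnnihilator_succ_of_ne (hp : p.Prime) (hq : q.Prime) (hqp : q ≠ p)
    (ha : a ^ q = 1) (ht : 1 ≤ t) (hb : a - 1 ∈ omegaAnnihilator p t) :
    a - 1 ∈ omegaAnnihilator p (t + 1) := by
  have hqb : q • (a - 1) ∈ omegaAnnihilator p (t + 1) := by
    rw [nsmul_sub_one_eq_neg_sum ha]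
    refine neg_mem (sum_mem fun j hj => nsmul_mem ?_ _)
    have hj : 2 ≤ j := (mem_Ico.mp hj).1
    exact omegaAnnihilator_antitone (by nlinarith) (pow_mem_omegaAnnihilator_mul hb j)
  exact fun x hx => eq_zero_of_nsmul_eq_zero_of_coprime ((Nat.coprime_primes hq hp).mpr hqp)
    (hqb x hx) (nsmul_mem_omegaAnnihilator_succ hb x hx)

theorem sub_one_mem_omegaAnnihilator_succ_of_eq (hp : p.Prime) (hdiv : ∀ x : A, ∃ y, p • y = x)
    (ha : a ^ p = 1) (ht : 2 ≤ (p - 1) * t) (hb : a - 1 ∈ omegaAnnihilator p t) :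
    a - 1 ∈ omegaAnnihilator p (t + 1) := by
  refine mem_omegaAnnihilator_of_nsmul_mem_succ hdiv ?_
  rw [nsmul_sub_one_eq_neg_sum ha]
  refine neg_mem (sum_mem fun j hj => ?_)
  obtain ⟨hj2, hjp⟩ : 2 ≤ j ∧ j < p + 1 := mem_Ico.mp hj
  rcases (Nat.lt_succ_iff.mp hjp).lt_or_eq with hjp | rfl
  · obtain ⟨c, hc⟩ := hp.dvd_choose_self (by omega) hjp
    rw [hc, mul_nsmul]
    refine nsmul_mem (nsmul_mem_omegaAnnihilator_succ ?_) c
    exact omegaAnnihilator_antitone (by nlinarith) (pow_mem_omegaAnnihilator_mul hb j)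
  · have hpt : t + 2 ≤ j * t := by
      have := Nat.sub_one_mul j t
      have := Nat.le_mul_of_pos_left t hp.pos
      omega
    rw [Nat.choose_self, one_smul]
    exact omegaAnnihilator_antitone hpt (pow_mem_omegaAnnihilator_mul hb j)

theorem sub_one_mem_omegaAnnihilator_of_pow_prime_eq_one (hp : p.Prime)
    (hdiv : ∀ x : A, ∃ y, p • y = x) {k : ℕ} (hk : 2 ≤ (p - 1) * k) (hq : q.Prime)
    (ha : a ^ q = 1) (hb : a - 1 ∈ omegaAnnihilator p k) (n : ℕ) :
    a - 1 ∈ omegaAnnihilator p n := by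
  suffices h : ∀ t, k ≤ t → a - 1 ∈ omegaAnnihilator p t from
    omegaAnnihilator_antitone (A := A) (le_max_left n k) (h _ (le_max_right n k))
  intro t hkt
  induction t, hkt using Nat.le_induction with
  | base => exact hb
  | succ t hkt ih =>
    have ht : 2 ≤ (p - 1) * t := hk.trans (Nat.mul_le_mul_left _ hkt)
    rcases eq_or_ne q p with rfl | hqp
    · exact sub_one_mem_omegaAnnihilator_succ_of_eq hp hdiv ha ht ih
    · exact sub_one_mem_omegaAnnihilator_succ_of_ne hp hq hqp ha
        (Nat.pos_of_ne_zero (by rintro rfl; simp at ht)) ih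

theorem eq_one_of_pow_prime_eq_one (hp : p.Prime) (hdiv : ∀ x : A, ∃ y, p • y = x)
    (htor : ∀ x : A, ∃ n, p ^ n • x = 0) {k : ℕ} (hk : 2 ≤ (p - 1) * k) (hq : q.Prime)
    (ha : a ^ q = 1) (hb : a - 1 ∈ omegaAnnihilator p k) : a = 1 := by
  refine sub_eq_zero.mp (AddMonoidHom.ext fun x => ?_)
  obtain ⟨n, hn⟩ := htor x
  exact sub_one_mem_omegaAnnihilator_of_pow_prime_eq_one hp hdiv hk hq ha hb n x hn

end AddMonoid.End

namespace AddAut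

variable {A : Type*}

theorem coe_nsmul [Add A] (α : AddAut A) : ∀ n : ℕ, ⇑(n • α) = (⇑α)^[n]
  | 0 => rfl
  | n + 1 => by rw [succ_nsmul, coe_add, coe_nsmul α n, Function.iterate_succ]

variable [AddCommGroup A]

def toAddMonoidEnd (α : AddAut A) : AddMonoid.End A :=
  α.toAddMonoidHom

theorem coe_toAddMonoidEnd (α : AddAut A) : ⇑α.toAddMonoidEnd = α :=
  rfl

theorem toAddMonoidEnd_nsmul (α : AddAut A) (n : ℕ) :
    (n • α).toAddMonoidEnd = α.toAddMonoidEnd ^ n :=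
  AddMonoid.End.ext _ fun x => by
    rw [AddMonoid.End.coe_pow, coe_toAddMonoidEnd, coe_toAddMonoidEnd, coe_nsmul]

open AddMonoid.End in
theorem eq_zero_of_isOfFinAddOrder_of_fixes_omega {p k : ℕ} (hp : p.Prime)
    (hdiv : ∀ x : A, ∃ y, p • y = x) (htor : ∀ x : A, ∃ n, p ^ n • x = 0)
    (hk : 2 ≤ (p - 1) * k) {α : AddAut A} (hα : IsOfFinAddOrder α)
    (h : ∀ x : A, p ^ k • x = 0 → α x = x) : α = 0 := by
  by_contra hne
  set n := addOrderOf α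
  have hq : n.minFac.Prime := Nat.minFac_prime (mt AddMonoid.addOrderOf_eq_one_iff.mp hne)
  set β := (n / n.minFac) • α
  have hβ : addOrderOf β = n.minFac :=
    addOrderOf_nsmul_addOrderOf_sub hα.addOrderOf_pos.ne' (Nat.minFac_dvd n)
  have hβ_pow : β.toAddMonoidEnd ^ n.minFac = 1 := by
    rw [← toAddMonoidEnd_nsmul, ← hβ, addOrderOf_nsmul_eq_zero]
    rfl
  have hβ_fix : β.toAddMonoidEnd - 1 ∈ omegaAnnihilator p k := fun x hx =>
    show β x - x = 0 by rw [coe_nsmul, Function.iterate_fixed (h x hx), sub_self]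
  have hβ_zero : β = 0 := by
    have hβ_one := eq_one_of_pow_prime_eq_one hp hdiv htor hk hq hβ_pow hβ_fix
    exact AddEquiv.ext fun x => DFunLike.congr_fun hβ_one x
  exact hq.one_lt.ne' (by rw [← hβ, hβ_zero, addOrderOf_zero])

end AddAut

namespace ZpInfty

variable (p : ℕ) [Fact p.Prime]

theorem exists_nsmul_eq (x : ZpInfty p) : ∃ y : ZpInfty p, p • y = x := by
  obtain ⟨x, rfl⟩ := QuotientAddGroup.mk'_surjective (padicIntAddSubgroup p) x
  have hp : (p : ℚ_[p]) ≠ 0 := by exact_mod_cast (Fact.out : p.Prime).ne_zero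
  refine ⟨QuotientAddGroup.mk' _ (x / p), ?_⟩
  rw [← map_nsmul, nsmul_eq_mul, mul_div_cancel₀ x hp]

theorem exists_pow_nsmul_eq_zero (x : ZpInfty p) : ∃ n : ℕ, p ^ n • x = 0 := by
  obtain ⟨x, rfl⟩ := QuotientAddGroup.mk'_surjective (padicIntAddSubgroup p) x
  have hp : (1 : ℝ) < p := by exact_mod_cast (Fact.out : p.Prime).one_lt
  obtain ⟨n, hn⟩ := pow_unbounded_of_one_lt ‖x‖ hp
  refine ⟨n, ?_⟩
  rw [← map_nsmul, QuotientAddGroup.mk'_apply, QuotientAddGroup.eq_zero_iff]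
  have hnorm : ‖p ^ n • x‖ ≤ 1 := by
    rw [nsmul_eq_mul, Nat.cast_pow, norm_mul, norm_pow, Padic.norm_p, inv_pow,
      inv_mul_le_one₀ (by positivity)]
    exact hn.le
  exact ⟨⟨p ^ n • x, hnorm⟩, rfl⟩

end ZpInfty

/-- Let `T` be the discrete `p`-torus of rank `r` and set `k = 1`
for odd `p`, `k = 2` for `p = 2`.  Any finite-order automorphism of `T` that is the
identity on `Ω_k(T)` is the identity; i.e. finite groups of automorphisms act
faithfully on `Ω_k(T)`. -/
theorem addAut_discretePTorus_faithful_on_omega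
    (p : ℕ) [Fact p.Prime] (r : ℕ)
    (α : AddAut (DiscretePTorus p r)) (hα : IsOfFinAddOrder α)
    (h : ∀ x : DiscretePTorus p r,
      p ^ (if p = 2 then 2 else 1) • x = 0 → α x = x) :
    α = 0 := by
  have hp : p.Prime := Fact.out
  have hdiv : ∀ x : DiscretePTorus p r, ∃ y, p • y = x := fun x => by
    choose y hy using fun i => ZpInfty.exists_nsmul_eq p (x i)
    exact ⟨y, funext hy⟩
  have htor : ∀ x : DiscretePTorus p r, ∃ n, p ^ n • x = 0 :=
    Pi.exists_pow_nsmul_eq_zero fun _ => ZpInfty.exists_pow_nsmul_eq_zero p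
  have hk : 2 ≤ (p - 1) * if p = 2 then 2 else 1 := by
    have := hp.two_le
    split_ifs with hp2 <;> omega
  exact AddAut.eq_zero_of_isOfFinAddOrder_of_fixes_omega hp hdiv htor hk hα h
end
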